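/- There exists a constant κ > 0, depending only on J and K, such that for all J×K real matrices U and V with orthonormal columns (UᵀU = VᵀV = I_K) and every J×J real symmetric matrix M, ‖U diag(UᵀMU) Uᵀ − V diag(VᵀMV) Vᵀ‖∞ ≤ κ ‖U − V‖∞ ‖M‖∞, where diag(N) denotes the diagonal matrix having the same diagonal entries as N. Equivalently, the orthogonal projection P_𝒟 of symmetric matrices onto the subspace 𝒟 = {U D' Uᵀ : D' a K×K diagonal matrix} is Lipschitz in U, uniformly over symmetric M of bounded entrywise norm. -/

import Mathlib

open Matrix

attribute [local instance] Matrix.normedAddCommGroup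

/-!
For the entrywise maximum norm, a product of matrices picks up a factor equal to the inner
dimension: `‖A * B‖ ≤ m ‖A‖ ‖B‖`. Matrices with orthonormal columns have entries of modulus at
most `1`, and `N ↦ diagonal N.diag` does not increase the norm. Telescoping
`U D_U Uᵀ - V D_V Vᵀ` and `Uᵀ M U - Vᵀ M V` into one difference per factor then bounds the
difference by `4 J² K² ‖U - V‖ ‖M‖`.
-/

namespace Matrix

theorem norm_diagonal_diag_le {n α : Type*} [Fintype n] [DecidableEq n] [NormedAddCommGroup α]
    (N : Matrix n n α) : ‖diagonal N.diag‖ ≤ ‖N‖ := by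
  rw [norm_diagonal]
  exact (pi_norm_le_iff_of_nonneg (norm_nonneg N)).2 fun _ => norm_entry_le_entrywise_sup_norm N

theorem norm_le_one_of_transpose_mul_self_eq_one {m n : Type*} [Fintype m] [Fintype n]
    [DecidableEq n] {U : Matrix m n ℝ} (hU : Uᵀ * U = 1) : ‖U‖ ≤ 1 := by
  refine (norm_le_iff zero_le_one).2 fun i k => ?_
  have hcol : ∑ j, U j k * U j k = 1 := by
    simpa [mul_apply] using congrFun (congrFun hU k) k
  have hentry : U i k * U i k ≤ 1 :=
    hcol ▸ Finset.single_le_sum (fun j _ => mul_self_nonneg (U j k)) (Finset.mem_univ i)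
  rwa [Real.norm_eq_abs, abs_le_one_iff_mul_self_le_one]

section Entrywise

variable {l m n p α : Type*} [Fintype l] [Fintype m] [Fintype n] [Fintype p]
  [NonUnitalNormedRing α]

theorem norm_mul_le_card_mul (A : Matrix l m α) (B : Matrix m n α) :
    ‖A * B‖ ≤ Fintype.card m * (‖A‖ * ‖B‖) := by
  refine (norm_le_iff (by positivity)).2 fun i j => ?_
  calc ‖(A * B) i j‖ ≤ ∑ k, ‖A i k‖ * ‖B k j‖ :=
        norm_sum_le_of_le _ fun k _ => norm_mul_le _ _
    _ ≤ ∑ _k : m, ‖A‖ * ‖B‖ := by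
        gcongr <;> exact norm_entry_le_entrywise_sup_norm _
    _ = Fintype.card m * (‖A‖ * ‖B‖) := by simp

theorem norm_mul_mul_le_card_mul (A : Matrix l m α) (B : Matrix m n α) (C : Matrix n p α) :
    ‖A * B * C‖ ≤ Fintype.card m * Fintype.card n * (‖A‖ * ‖B‖ * ‖C‖) :=
  calc ‖A * B * C‖ ≤ Fintype.card n * (‖A * B‖ * ‖C‖) := norm_mul_le_card_mul _ _
    _ ≤ Fintype.card n * (Fintype.card m * (‖A‖ * ‖B‖) * ‖C‖) := by
        gcongr; exact norm_mul_le_card_mul _ _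
    _ = Fintype.card m * Fintype.card n * (‖A‖ * ‖B‖ * ‖C‖) := by ring

theorem norm_mul_mul_sub_mul_mul_le (A A' : Matrix l m α) (B B' : Matrix m n α)
    (C C' : Matrix n p α) :
    ‖A * B * C - A' * B' * C'‖ ≤ Fintype.card m * Fintype.card n *
      (‖A - A'‖ * ‖B‖ * ‖C‖ + ‖A'‖ * ‖B - B'‖ * ‖C‖ + ‖A'‖ * ‖B'‖ * ‖C - C'‖) := by
  have htelescope : A * B * C - A' * B' * C'
      = (A - A') * B * C + A' * (B - B') * C + A' * B' * (C - C') := by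
    simp only [Matrix.sub_mul, Matrix.mul_sub]
    abel
  rw [htelescope, mul_add, mul_add]
  refine (norm_add₃_le ..).trans ?_
  gcongr <;> exact norm_mul_mul_le_card_mul _ _ _

end Entrywise

section DiagProjection

variable {m n α : Type*} [Fintype m] [Fintype n] [DecidableEq n] [NonUnitalNormedRing α]

/-- For `U` with orthonormal columns this is the orthogonal projection `P_𝒟 M` onto
`𝒟 = {U D' Uᵀ : D' diagonal}`. -/
def diagProjection (U : Matrix m n α) (M : Matrix m m α) : Matrix m m α :=
  U * diagonal (Uᵀ * M * U).diag * Uᵀ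

theorem norm_diagonal_diag_transpose_mul_mul_le {U : Matrix m n α} (hU : ‖U‖ ≤ 1)
    (M : Matrix m m α) :
    ‖diagonal (Uᵀ * M * U).diag‖ ≤ Fintype.card m * Fintype.card m * ‖M‖ :=
  calc ‖diagonal (Uᵀ * M * U).diag‖ ≤ ‖Uᵀ * M * U‖ := norm_diagonal_diag_le _
    _ ≤ Fintype.card m * Fintype.card m * (‖Uᵀ‖ * ‖M‖ * ‖U‖) := norm_mul_mul_le_card_mul _ _ _
    _ ≤ Fintype.card m * Fintype.card m * (1 * ‖M‖ * 1) := by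
        rw [norm_transpose]; gcongr
    _ = Fintype.card m * Fintype.card m * ‖M‖ := by ring

theorem norm_diagonal_diag_transpose_mul_mul_sub_le {U V : Matrix m n α} (hU : ‖U‖ ≤ 1)
    (hV : ‖V‖ ≤ 1) (M : Matrix m m α) :
    ‖diagonal (Uᵀ * M * U).diag - diagonal (Vᵀ * M * V).diag‖
      ≤ 2 * Fintype.card m * Fintype.card m * (‖U - V‖ * ‖M‖) :=
  calc ‖diagonal (Uᵀ * M * U).diag - diagonal (Vᵀ * M * V).diag‖
      = ‖diagonal (Uᵀ * M * U - Vᵀ * M * V).diag‖ := by rw [diag_sub, diagonal_sub]; rfl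
    _ ≤ ‖Uᵀ * M * U - Vᵀ * M * V‖ := norm_diagonal_diag_le _
    _ ≤ Fintype.card m * Fintype.card m *
          (‖Uᵀ - Vᵀ‖ * ‖M‖ * ‖U‖ + ‖Vᵀ‖ * ‖M - M‖ * ‖U‖ + ‖Vᵀ‖ * ‖M‖ * ‖U - V‖) :=
        norm_mul_mul_sub_mul_mul_le _ _ _ _ _ _
    _ ≤ Fintype.card m * Fintype.card m *
          (‖U - V‖ * ‖M‖ * 1 + 1 * ‖M - M‖ * 1 + 1 * ‖M‖ * ‖U - V‖) := by
        rw [← transpose_sub, norm_transpose, norm_transpose]; gcongr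
    _ = 2 * Fintype.card m * Fintype.card m * (‖U - V‖ * ‖M‖) := by
        rw [sub_self, norm_zero]; ring

theorem norm_diagProjection_sub_le {U V : Matrix m n α} (hU : ‖U‖ ≤ 1) (hV : ‖V‖ ≤ 1)
    (M : Matrix m m α) :
    ‖diagProjection U M - diagProjection V M‖
      ≤ 4 * Fintype.card m ^ 2 * Fintype.card n ^ 2 * (‖U - V‖ * ‖M‖) := by
  have hDU := norm_diagonal_diag_transpose_mul_mul_le hU M
  have hDV := norm_diagonal_diag_transpose_mul_mul_le hV M
  have hDUV := norm_diagonal_diag_transpose_mul_mul_sub_le hU hV M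
  calc ‖diagProjection U M - diagProjection V M‖
      ≤ Fintype.card n * Fintype.card n *
          (‖U - V‖ * ‖diagonal (Uᵀ * M * U).diag‖ * ‖Uᵀ‖
            + ‖V‖ * ‖diagonal (Uᵀ * M * U).diag - diagonal (Vᵀ * M * V).diag‖ * ‖Uᵀ‖
            + ‖V‖ * ‖diagonal (Vᵀ * M * V).diag‖ * ‖Uᵀ - Vᵀ‖) :=
        norm_mul_mul_sub_mul_mul_le _ _ _ _ _ _
    _ ≤ Fintype.card n * Fintype.card n *
          (‖U - V‖ * (Fintype.card m * Fintype.card m * ‖M‖) * 1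
            + 1 * (2 * Fintype.card m * Fintype.card m * (‖U - V‖ * ‖M‖)) * 1
            + 1 * (Fintype.card m * Fintype.card m * ‖M‖) * ‖U - V‖) := by
        rw [← transpose_sub, norm_transpose, norm_transpose]; gcongr
    _ = 4 * Fintype.card m ^ 2 * Fintype.card n ^ 2 * (‖U - V‖ * ‖M‖) := by ring

end DiagProjection

end Matrix

/-- Part of Lemma 8: the orthogonal projection `M ↦ U diag(Uᵀ M U) Uᵀ` of symmetric matrices
onto the subspace `𝒟 = {U D' Uᵀ : D' diagonal}` is Lipschitz in the orthonormal frame `U`,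
uniformly over symmetric `M` of bounded entrywise norm.
(Here the `Matrix` norm is the entrywise maximum norm.) -/
theorem diag_projection_lipschitz (J K : ℕ) :
    ∃ κ > (0 : ℝ), ∀ U V : Matrix (Fin J) (Fin K) ℝ,
      Uᵀ * U = 1 → Vᵀ * V = 1 →
      ∀ M : Matrix (Fin J) (Fin J) ℝ, M.IsSymm →
        ‖U * Matrix.diagonal (fun i => (Uᵀ * M * U) i i) * Uᵀ
            - V * Matrix.diagonal (fun i => (Vᵀ * M * V) i i) * Vᵀ‖
          ≤ κ * ‖U - V‖ * ‖M‖ := by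
  refine ⟨4 * J ^ 2 * K ^ 2 + 1, by positivity, fun U V hU hV M _ => ?_⟩
  have hbound := norm_diagProjection_sub_le (norm_le_one_of_transpose_mul_self_eq_one hU)
    (norm_le_one_of_transpose_mul_self_eq_one hV) M
  rw [Fintype.card_fin, Fintype.card_fin] at hbound
  have hnonneg := mul_nonneg (norm_nonneg (U - V)) (norm_nonneg M)
  calc _ ≤ 4 * (J : ℝ) ^ 2 * K ^ 2 * (‖U - V‖ * ‖M‖) := hbound
    _ ≤ (4 * J ^ 2 * K ^ 2 + 1) * ‖U - V‖ * ‖M‖ := by nlinarith
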